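/- arXiv:2211.14212 — 3 statements merged into one kernel-verified Lean document; each statement's English description precedes it below -/
import Mathlib

section
/- Under the Golub–Kahan relations A V_k = U_{k+1} H_k, U_{k+1}ᵀU_{k+1} = I, and Aᵀ U_{k+1} = V_{k+1} G_k with V_{k+1}ᵀV_{k+1} = I whose first k columns are V_k, for every y ∈ ℝ^k one has ‖Aᵀ(b − A V_k y)‖₂ = ‖ ‖Aᵀb‖ e₁ − G_k H_k y ‖₂, provided V_{k+1} e₁ = Aᵀb/‖Aᵀb‖. -/
/-! Both terms of the normal-equation residual lie in the range of `V'`: `Aᵀ A V = Aᵀ U H = V' G H`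
and `Aᵀ b = V' (‖Aᵀ b‖ e₁)`, so `Aᵀ (b - A V y) = V' (‖Aᵀ b‖ e₁ - G H y)`, and `V'` has orthonormal
columns, hence preserves the Euclidean norm. -/

open Matrix

noncomputable def euclNorm {ι : Type*} [Fintype ι] (v : ι → ℝ) : ℝ :=
  Real.sqrt (∑ i, v i ^ 2)

theorem euclNorm_eq_sqrt_dotProduct {ι : Type*} [Fintype ι] (v : ι → ℝ) :
    euclNorm v = Real.sqrt (v ⬝ᵥ v) := by
  simp only [euclNorm, dotProduct, sq]

theorem euclNorm_eq_zero {ι : Type*} [Fintype ι] {v : ι → ℝ} : euclNorm v = 0 ↔ v = 0 := by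
  have hnonneg : 0 ≤ v ⬝ᵥ v := Finset.sum_nonneg fun i _ => mul_self_nonneg (v i)
  rw [euclNorm_eq_sqrt_dotProduct, Real.sqrt_eq_zero hnonneg, dotProduct_self_eq_zero]

theorem euclNorm_smul_inv_smul {ι : Type*} [Fintype ι] (v : ι → ℝ) :
    euclNorm v • (euclNorm v)⁻¹ • v = v := by
  by_cases hv : v = 0
  · simp [hv]
  · rw [smul_smul, mul_inv_cancel₀ (mt euclNorm_eq_zero.mp hv), one_smul]

theorem euclNorm_mulVec_of_transpose_mul_self {m n : Type*} [Fintype m] [Fintype n]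
    [DecidableEq n] {Q : Matrix m n ℝ} (hQ : Qᵀ * Q = 1) (x : n → ℝ) :
    euclNorm (Q *ᵥ x) = euclNorm x := by
  rw [euclNorm_eq_sqrt_dotProduct, euclNorm_eq_sqrt_dotProduct, dotProduct_mulVec,
    ← mulVec_transpose, mulVec_mulVec, hQ, one_mulVec]

theorem transpose_mulVec_residual_eq {m n p q r : Type*} [Fintype m] [Fintype n] [Fintype p]
    [Fintype q] [Fintype r] {A : Matrix m n ℝ} {V : Matrix n p ℝ} {U : Matrix m q ℝ}
    {H : Matrix q p ℝ} {V' : Matrix n r ℝ} {G : Matrix r q ℝ}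
    (hAV : A * V = U * H) (hAU : Aᵀ * U = V' * G) {b : m → ℝ} {c : r → ℝ}
    (hc : Aᵀ *ᵥ b = V' *ᵥ c) (y : p → ℝ) :
    Aᵀ *ᵥ (b - A *ᵥ (V *ᵥ y)) = V' *ᵥ (c - (G * H) *ᵥ y) := by
  have hAtAV : Aᵀ * A * V = V' * (G * H) := by
    rw [Matrix.mul_assoc, hAV, ← Matrix.mul_assoc, hAU, Matrix.mul_assoc]
  rw [mulVec_sub, mulVec_sub, hc, mulVec_mulVec, mulVec_mulVec, hAtAV, ← mulVec_mulVec]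

theorem stmt_8_general {N M k : ℕ} (A : Matrix (Fin N) (Fin M) ℝ) (b : Fin N → ℝ)
    (V : Matrix (Fin M) (Fin k) ℝ) (V' : Matrix (Fin M) (Fin (k + 1)) ℝ)
    (U : Matrix (Fin N) (Fin (k + 1)) ℝ)
    (H : Matrix (Fin (k + 1)) (Fin k) ℝ) (G : Matrix (Fin (k + 1)) (Fin (k + 1)) ℝ)
    (hAV : A * V = U * H)
    (hAU : Aᵀ * U = V' * G) (hV' : V'ᵀ * V' = 1)
    (hV1 : V'.mulVec (Pi.single 0 1 : Fin (k + 1) → ℝ) = (euclNorm (Aᵀ.mulVec b))⁻¹ • Aᵀ.mulVec b) :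
    ∀ y : Fin k → ℝ,
      euclNorm (Aᵀ.mulVec (b - A.mulVec (V.mulVec y))) =
        euclNorm (euclNorm (Aᵀ.mulVec b) • (Pi.single 0 1 : Fin (k + 1) → ℝ) -
          (G * H).mulVec y) := by
  intro y
  have hAtb : Aᵀ *ᵥ b = V' *ᵥ (euclNorm (Aᵀ *ᵥ b) • Pi.single 0 1) := by
    rw [mulVec_smul, hV1, euclNorm_smul_inv_smul]
  rw [transpose_mulVec_residual_eq hAV hAU hAtb, euclNorm_mulVec_of_transpose_mul_self hV']

theorem stmt_8 {N M k : ℕ} (A : Matrix (Fin N) (Fin M) ℝ) (b : Fin N → ℝ)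
    (hb : Aᵀ.mulVec b ≠ 0)
    (V : Matrix (Fin M) (Fin k) ℝ) (V' : Matrix (Fin M) (Fin (k + 1)) ℝ)
    (U : Matrix (Fin N) (Fin (k + 1)) ℝ)
    (H : Matrix (Fin (k + 1)) (Fin k) ℝ) (G : Matrix (Fin (k + 1)) (Fin (k + 1)) ℝ)
    (hAV : A * V = U * H) (hU : Uᵀ * U = 1)
    (hAU : Aᵀ * U = V' * G) (hV' : V'ᵀ * V' = 1)
    (hcol : V'.submatrix id Fin.castSucc = V)
    (hU1 : U.mulVec (Pi.single 0 1 : Fin (k + 1) → ℝ) = (euclNorm b)⁻¹ • b)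
    (hV1 : V'.mulVec (Pi.single 0 1 : Fin (k + 1) → ℝ) = (euclNorm (Aᵀ.mulVec b))⁻¹ • Aᵀ.mulVec b) :
    ∀ y : Fin k → ℝ,
      euclNorm (Aᵀ.mulVec (b - A.mulVec (V.mulVec y))) =
        euclNorm (euclNorm (Aᵀ.mulVec b) • (Pi.single 0 1 : Fin (k + 1) → ℝ) -
          (G * H).mulVec y) :=
  stmt_8_general A b V V' U H G hAV hAU hV' hV1
end

section
/- The minimum-norm least-squares solution A⁺b satisfies A⁺b ∈ span{(AᵀA)^i Aᵀ b : i ≥ 0}, so exact-arithmetic LSQR converges to A⁺b in at most M iterations. -/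
open Matrix

noncomputable def l2enorm {ι : Type*} [Fintype ι] (v : ι → ℝ) : ℝ :=
  Real.sqrt (∑ i, v i ^ 2)

private lemma sum_sq_expand {n : ℕ} (r u : Fin n → ℝ) (t : ℝ) :
    ∑ i, (r i + t * u i) ^ 2 =
      (∑ i, r i ^ 2) + 2 * t * (∑ i, u i * r i) + t ^ 2 * ∑ i, u i ^ 2 := by
  rw [Finset.mul_sum, Finset.mul_sum, ← Finset.sum_add_distrib, ← Finset.sum_add_distrib]
  apply Finset.sum_congr rfl
  intro i _
  ring

private lemma sum_matrix_mulVec {m n : Type*} [Fintype n] (s : Finset ℕ)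
    (f : ℕ → Matrix m n ℝ) (v : n → ℝ) :
    (∑ j ∈ s, f j) *ᵥ v = ∑ j ∈ s, (f j) *ᵥ v := by
  induction s using Finset.cons_induction with
  | empty => simp [Matrix.zero_mulVec]
  | cons a s ha ih => rw [Finset.sum_cons, Finset.sum_cons, Matrix.add_mulVec, ih]

private lemma euclid_decomp {M : ℕ} (K : Submodule ℝ (EuclideanSpace ℝ (Fin M)))
    (x : EuclideanSpace ℝ (Fin M)) : ∃ k ∈ K, ∃ z ∈ Kᗮ, x = k + z :=
  K.exists_add_mem_mem_orthogonal x

private lemma euclid_inner {M : ℕ} (x y : EuclideanSpace ℝ (Fin M)) :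
    (inner ℝ x y : ℝ) = ∑ i, x i * y i := by
  simp [PiLp.inner_apply, RCLike.inner_apply, mul_comm]

private lemma euclid_orth {M : ℕ} (K : Submodule ℝ (EuclideanSpace ℝ (Fin M)))
    (z u : EuclideanSpace ℝ (Fin M)) (hz : z ∈ Kᗮ) (hu : u ∈ K) :
    ∑ i, u i * z i = 0 := by
  have h := (Submodule.mem_orthogonal K z).mp hz u hu
  rwa [euclid_inner] at h

/-- least-squares minimizers satisfy the normal equations -/
private lemma normal_of_min {N M : ℕ} (A : Matrix (Fin N) (Fin M) ℝ) (b : Fin N → ℝ)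
    (x : Fin M → ℝ)
    (h : ∀ y : Fin M → ℝ, l2enorm (A.mulVec x - b) ≤ l2enorm (A.mulVec y - b)) :
    Aᵀ.mulVec (A.mulVec x - b) = 0 := by
  set r : Fin N → ℝ := A.mulVec x - b with hr
  have hd : ∀ v : Fin M → ℝ, (A.mulVec v) ⬝ᵥ r = 0 := by
    intro v
    set u : Fin N → ℝ := A.mulVec v with hu
    set c : ℝ := ∑ i, u i * r i with hc
    set a : ℝ := ∑ i, u i ^ 2 with ha
    have ha0 : 0 ≤ a := Finset.sum_nonneg fun i _ => sq_nonneg _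
    have key : ∀ t : ℝ, 0 ≤ 2 * t * c + t ^ 2 * a := by
      intro t
      have h1 := h (x + t • v)
      have h2 : A.mulVec (x + t • v) - b = fun i => r i + t * u i := by
        funext i
        simp [Matrix.mulVec_add, Matrix.mulVec_smul, hr, hu]
        ring
      rw [l2enorm, l2enorm, h2] at h1
      simp only at h1
      rw [sum_sq_expand] at h1
      have h3 : (∑ i, r i ^ 2) ≤ (∑ i, r i ^ 2) + 2 * t * c + t ^ 2 * a := by
        refine (Real.sqrt_le_sqrt_iff ?_).mp h1
        calc (0:ℝ) ≤ ∑ i, (r i + t * u i) ^ 2 := Finset.sum_nonneg fun i _ => sq_nonneg _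
        _ = _ := sum_sq_expand r u t
      linarith
    have hc0 : c = 0 := by
      have h4 := key (-c / (a + 1))
      have h5 : (0:ℝ) < a + 1 := by linarith
      have e1 : 2 * (-c / (a + 1)) * c + (-c / (a + 1)) ^ 2 * a
          = -(c ^ 2 * (a + 2)) / (a + 1) ^ 2 := by
        field_simp
        ring
      rw [e1] at h4
      have h7 : c ^ 2 * (a + 2) ≤ 0 := by
        by_contra hcon
        push_neg at hcon
        have : -(c ^ 2 * (a + 2)) / (a + 1) ^ 2 < 0 :=
          div_neg_of_neg_of_pos (by linarith) (by positivity)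
        linarith
      nlinarith [sq_nonneg c]
    simpa [dotProduct, hc, hu] using hc0
  funext j
  have := hd (Pi.single j 1)
  simpa [Matrix.mulVec, dotProduct, Pi.single_apply, Finset.sum_ite_eq',
    mul_comm] using this

/-- solutions of the normal equations are least-squares minimizers -/
private lemma min_of_normal {N M : ℕ} (A : Matrix (Fin N) (Fin M) ℝ) (b : Fin N → ℝ)
    (x : Fin M → ℝ) (h : Aᵀ.mulVec (A.mulVec x - b) = 0) :
    ∀ y : Fin M → ℝ, l2enorm (A.mulVec x - b) ≤ l2enorm (A.mulVec y - b) := by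
  intro y
  set r : Fin N → ℝ := A.mulVec x - b with hr
  set u : Fin N → ℝ := A.mulVec (y - x) with hu
  have h2 : A.mulVec y - b = fun i => r i + 1 * u i := by
    funext i
    simp [Matrix.mulVec_sub, hr, hu]
  have hur : ∑ i, u i * r i = 0 := by
    have h3 : (y - x) ⬝ᵥ (Aᵀ.mulVec r) = u ⬝ᵥ r := by
      rw [Matrix.dotProduct_mulVec, Matrix.vecMul_transpose, hu]
    rw [h, dotProduct_zero] at h3
    simpa [dotProduct] using h3.symm
  rw [l2enorm, l2enorm, h2]
  apply Real.sqrt_le_sqrt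
  rw [sum_sq_expand, hur]
  have : (0:ℝ) ≤ ∑ i, u i ^ 2 := Finset.sum_nonneg fun i _ => sq_nonneg _
  linarith

theorem stmt_14 {N M : ℕ} (A : Matrix (Fin N) (Fin M) ℝ) (b : Fin N → ℝ)
    (xp : Fin M → ℝ)
    (hmin : ∀ y : Fin M → ℝ, l2enorm (A.mulVec xp - b) ≤ l2enorm (A.mulVec y - b))
    (hminnorm : ∀ x : Fin M → ℝ,
      (∀ y : Fin M → ℝ, l2enorm (A.mulVec x - b) ≤ l2enorm (A.mulVec y - b)) →
      l2enorm xp ≤ l2enorm x) :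
    xp ∈ Submodule.span ℝ {w : Fin M → ℝ | ∃ i : ℕ, w = ((Aᵀ * A) ^ i).mulVec (Aᵀ.mulVec b)} ∧
    xp ∈ Submodule.span ℝ {w : Fin M → ℝ | ∃ i < M, w = ((Aᵀ * A) ^ i).mulVec (Aᵀ.mulVec b)} := by
  classical
  set B : Matrix (Fin M) (Fin M) ℝ := Aᵀ * A with hB
  set v : Fin M → ℝ := Aᵀ.mulVec b with hv
  set S : Set (Fin M → ℝ) := {w | ∃ i : ℕ, w = (B ^ i).mulVec v} with hS
  set S' : Set (Fin M → ℝ) := {w | ∃ i < M, w = (B ^ i).mulVec v} with hS'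
  -- Step 1: the two spans agree (Cayley–Hamilton)
  have key : ∀ i : ℕ, (B ^ i).mulVec v ∈ Submodule.span ℝ S' := by
    intro i
    induction i using Nat.strong_induction_on with
    | _ i ih =>
      rcases lt_or_ge i M with h | h
      · exact Submodule.subset_span ⟨i, h, rfl⟩
      · rcases Nat.eq_zero_or_pos M with hM | hM
        · have hz : (B ^ i).mulVec v = 0 := by
            subst hM
            exact Subsingleton.elim _ _
          rw [hz]; exact Submodule.zero_mem _
        · have hdeg : B.charpoly.natDegree = M := by
            rw [Matrix.charpoly_natDegree_eq_dim, Fintype.card_fin]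
          have hCH := B.aeval_self_charpoly
          rw [Polynomial.aeval_eq_sum_range, hdeg, Finset.sum_range_succ] at hCH
          have hlead : B.charpoly.coeff M = 1 := by
            have := B.charpoly_monic.coeff_natDegree
            rwa [hdeg] at this
          rw [hlead, one_smul] at hCH
          have hBM : B ^ M = -∑ j ∈ Finset.range M, B.charpoly.coeff j • B ^ j := by
            rw [add_comm] at hCH
            exact eq_neg_of_add_eq_zero_left hCH
          have hBi : B ^ i = -∑ j ∈ Finset.range M, B.charpoly.coeff j • B ^ (i - M + j) := by
            calc B ^ i = B ^ (i - M) * B ^ M := by rw [← pow_add]; congr 1; omega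
            _ = B ^ (i - M) * (-∑ j ∈ Finset.range M, B.charpoly.coeff j • B ^ j) := by
                rw [hBM]
            _ = -∑ j ∈ Finset.range M, B.charpoly.coeff j • B ^ (i - M + j) := by
                rw [mul_neg, Finset.mul_sum]
                congr 1
                apply Finset.sum_congr rfl
                intro j _
                rw [mul_smul_comm, ← pow_add]
          rw [hBi, Matrix.neg_mulVec, sum_matrix_mulVec]
          refine neg_mem (Submodule.sum_mem _ fun j hj => ?_)
          rw [Matrix.smul_mulVec]
          refine Submodule.smul_mem _ _ (ih (i - M + j) ?_)
          have := Finset.mem_range.mp hj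
          omega
  have hspan : Submodule.span ℝ S = Submodule.span ℝ S' := by
    apply le_antisymm
    · rw [Submodule.span_le]
      rintro w ⟨i, rfl⟩
      exact key i
    · apply Submodule.span_mono
      rintro w ⟨i, _, rfl⟩
      exact ⟨i, rfl⟩
  -- Step 2: xp lies in the full Krylov span
  have hnormal : B.mulVec xp = v := by
    have h0 := normal_of_min A b xp hmin
    rw [Matrix.mulVec_sub, Matrix.mulVec_mulVec, sub_eq_zero] at h0
    exact h0
  have hmain : xp ∈ Submodule.span ℝ S := by
    obtain ⟨k, hk, z, hz, hxp⟩ :=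
      euclid_decomp ((Submodule.span ℝ S).comap (WithLp.linearEquiv 2 ℝ (Fin M → ℝ)).toLinearMap)
        (WithLp.toLp 2 xp)
    have hinv : ∀ w, w ∈ Submodule.span ℝ S →
        B.mulVec w ∈ Submodule.span ℝ S := by
      intro w hw
      refine Submodule.span_induction ?_ ?_ ?_ ?_ hw
      · rintro x ⟨i, rfl⟩
        refine Submodule.subset_span ⟨i + 1, ?_⟩
        rw [Matrix.mulVec_mulVec, ← pow_succ']
      · show B.mulVec 0 ∈ _
        rw [Matrix.mulVec_zero]; exact Submodule.zero_mem _
      · intro x y _ _ hx hy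
        show B.mulVec (x + y) ∈ _
        rw [Matrix.mulVec_add]; exact Submodule.add_mem _ hx hy
      · intro c x _ hx
        show B.mulVec (c • x) ∈ _
        rw [Matrix.mulVec_smul]; exact Submodule.smul_mem _ _ hx
    have hxpk : xp = (k : Fin M → ℝ) + z := by simpa using congrArg WithLp.ofLp hxp
    have hBz_mem : B.mulVec z ∈ Submodule.span ℝ S := by
      have h1 : B.mulVec xp ∈ Submodule.span ℝ S := by
        rw [hnormal]
        exact Submodule.subset_span ⟨0, by simp⟩
      have h2 : B.mulVec z = B.mulVec xp - B.mulVec (k : Fin M → ℝ) := by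
        rw [hxpk, Matrix.mulVec_add]
        abel
      rw [h2]
      exact Submodule.sub_mem _ h1 (hinv k hk)
    have hAz : A.mulVec z = 0 := by
      have h3 : ∑ i, (B.mulVec z) i * z i = 0 := euclid_orth _ z (WithLp.toLp 2 (B.mulVec z)) hz hBz_mem
      have h4 : ∑ i, (B.mulVec z) i * z i = ∑ i, (A.mulVec z) i ^ 2 := by
        have h5 : (B.mulVec z) ⬝ᵥ z = (A.mulVec z) ⬝ᵥ (A.mulVec z) := by
          rw [dotProduct_comm, hB, ← Matrix.mulVec_mulVec,
            Matrix.dotProduct_mulVec, Matrix.vecMul_transpose]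
        simpa [dotProduct, sq] using h5
      rw [h4] at h3
      have h5 : ∀ i ∈ Finset.univ, (A.mulVec z) i ^ 2 = 0 :=
        (Finset.sum_eq_zero_iff_of_nonneg fun i _ => sq_nonneg _).mp h3
      funext i
      exact pow_eq_zero_iff (by norm_num) |>.mp (h5 i (Finset.mem_univ i))
    have hBz0 : B.mulVec z = 0 := by
      rw [hB, ← Matrix.mulVec_mulVec, hAz, Matrix.mulVec_zero]
    have hknormal : Aᵀ.mulVec (A.mulVec (k : Fin M → ℝ) - b) = 0 := by
      have h2 : B.mulVec (k : Fin M → ℝ) = v := by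
        rw [hxpk, Matrix.mulVec_add, hBz0, add_zero] at hnormal
        exact hnormal
      rw [Matrix.mulVec_sub, Matrix.mulVec_mulVec, sub_eq_zero]
      exact h2
    have hkls := min_of_normal A b (k : Fin M → ℝ) hknormal
    have hle := hminnorm (k : Fin M → ℝ) hkls
    have hkz : ∑ i, (k : Fin M → ℝ) i * z i = 0 := euclid_orth _ z k hz hk
    have hsum : ∑ i, xp i ^ 2 =
        (∑ i, (k : Fin M → ℝ) i ^ 2) + ∑ i, (z : Fin M → ℝ) i ^ 2 := by
      have h6 : ∀ i, xp i ^ 2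
          = (k : Fin M → ℝ) i ^ 2 + 2 * ((k : Fin M → ℝ) i * z i) + (z : Fin M → ℝ) i ^ 2 := by
        intro i
        rw [hxpk]
        show ((k : Fin M → ℝ) i + z i) ^ 2 = _
        ring
      calc ∑ i, xp i ^ 2
          = ∑ i, ((k : Fin M → ℝ) i ^ 2 + 2 * ((k : Fin M → ℝ) i * z i)
              + (z : Fin M → ℝ) i ^ 2) := Finset.sum_congr rfl fun i _ => h6 i
        _ = _ := by
            rw [Finset.sum_add_distrib, Finset.sum_add_distrib, ← Finset.mul_sum, hkz]
            ring
    have hle2 : ∑ i, xp i ^ 2 ≤ ∑ i, (k : Fin M → ℝ) i ^ 2 := by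
      refine (Real.sqrt_le_sqrt_iff ?_).mp hle
      exact Finset.sum_nonneg fun i _ => sq_nonneg _
    have hz0 : (z : Fin M → ℝ) = 0 := by
      have hzsum : ∑ i, (z : Fin M → ℝ) i ^ 2 ≤ 0 := by linarith
      have h5 : ∀ i ∈ Finset.univ, (z : Fin M → ℝ) i ^ 2 = 0 :=
        (Finset.sum_eq_zero_iff_of_nonneg fun i _ => sq_nonneg _).mp
          (le_antisymm hzsum (Finset.sum_nonneg fun i _ => sq_nonneg _))
      funext i
      exact pow_eq_zero_iff (by norm_num) |>.mp (h5 i (Finset.mem_univ i))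
    have hfin : xp = (k : Fin M → ℝ) := by
      rw [hxpk, hz0, add_zero]
    rw [hfin]
    exact hk
  exact ⟨hmain, hspan ▸ hmain⟩
end

section
/- For λ > 0, the map λ ↦ ‖A x_λ − b‖₂, where x_λ = (AᵀA + λ²I)⁻¹Aᵀb is the Tikhonov solution, is monotonically non-decreasing in λ, while λ ↦ ‖x_λ‖₂ is monotonically non-increasing. -/
/-!
`x_λ` minimises the Tikhonov functional `J_λ(x) = ‖A x - b‖² + λ² ‖x‖²`: it solves the normal
equations, so the cross term in `J_λ(x_λ + u)` vanishes. Adding the two minimality inequalities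
`J_λ₁(x_λ₁) ≤ J_λ₁(x_λ₂)` and `J_λ₂(x_λ₂) ≤ J_λ₂(x_λ₁)` gives
`(λ₂² - λ₁²)(‖x_λ₂‖² - ‖x_λ₁‖²) ≤ 0`, and feeding this back into the first one gives
`‖A x_λ₁ - b‖ ≤ ‖A x_λ₂ - b‖`.
-/

open Matrix

noncomputable def enorm {ι : Type*} [Fintype ι] (v : ι → ℝ) : ℝ :=
  Real.sqrt (∑ i, v i ^ 2)

noncomputable def tikhSol {N M : ℕ} (A : Matrix (Fin N) (Fin M) ℝ) (b : Fin N → ℝ)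
    (lam : ℝ) : Fin M → ℝ :=
  (Aᵀ * A + lam ^ 2 • (1 : Matrix (Fin M) (Fin M) ℝ))⁻¹.mulVec (Aᵀ.mulVec b)

theorem fit_le_and_penalty_le_of_minimizers {X : Type*} (f g : X → ℝ) {μ₁ μ₂ : ℝ} {x₁ x₂ : X}
    (hμ₁ : 0 ≤ μ₁) (hμ : μ₁ < μ₂)
    (h₁ : f x₁ + μ₁ * g x₁ ≤ f x₂ + μ₁ * g x₂) (h₂ : f x₂ + μ₂ * g x₂ ≤ f x₁ + μ₂ * g x₁) :
    f x₁ ≤ f x₂ ∧ g x₂ ≤ g x₁ := by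
  have hsum : (μ₂ - μ₁) * (g x₂ - g x₁) ≤ 0 := by linarith
  have hg : g x₂ ≤ g x₁ := sub_nonpos.1 (nonpos_of_mul_nonpos_right hsum (sub_pos.2 hμ))
  have hshift : 0 ≤ μ₁ * (g x₁ - g x₂) := mul_nonneg hμ₁ (sub_nonneg.2 hg)
  exact ⟨by linarith, hg⟩

theorem enorm_eq_sqrt_dotProduct {ι : Type*} [Fintype ι] (v : ι → ℝ) :
    _root_.enorm v = √(v ⬝ᵥ v) := by
  simp only [_root_.enorm, dotProduct, sq]

theorem enorm_le_enorm_of_dotProduct_self_le {ι : Type*} [Fintype ι] {v w : ι → ℝ}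
    (h : v ⬝ᵥ v ≤ w ⬝ᵥ w) : _root_.enorm v ≤ _root_.enorm w := by
  rw [enorm_eq_sqrt_dotProduct, enorm_eq_sqrt_dotProduct]
  exact Real.sqrt_le_sqrt h

theorem dotProduct_self_nonneg {ι : Type*} [Fintype ι] (v : ι → ℝ) : 0 ≤ v ⬝ᵥ v :=
  Fintype.sum_nonneg fun i => mul_self_nonneg (v i)

theorem dotProduct_add_self {ι : Type*} [Fintype ι] (v w : ι → ℝ) :
    (v + w) ⬝ᵥ (v + w) = v ⬝ᵥ v + 2 * (v ⬝ᵥ w) + w ⬝ᵥ w := by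
  rw [add_dotProduct, dotProduct_add, dotProduct_add, dotProduct_comm w v]
  ring

section Tikhonov

variable {m n : Type*} [Fintype m] [Fintype n] (A : Matrix m n ℝ) (b : m → ℝ)

noncomputable def tikhFunctional (lam : ℝ) (x : n → ℝ) : ℝ :=
  (A *ᵥ x - b) ⬝ᵥ (A *ᵥ x - b) + lam ^ 2 * (x ⬝ᵥ x)

theorem tikhFunctional_add (lam : ℝ) (x u : n → ℝ) :
    tikhFunctional A b lam (x + u) = tikhFunctional A b lam x
      + ((A *ᵥ u) ⬝ᵥ (A *ᵥ u) + lam ^ 2 * (u ⬝ᵥ u))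
      + 2 * (u ⬝ᵥ (Aᵀ *ᵥ (A *ᵥ x - b) + lam ^ 2 • x)) := by
  have hres : A *ᵥ (x + u) - b = (A *ᵥ x - b) + A *ᵥ u := by
    rw [mulVec_add]; abel
  have hcross : (A *ᵥ x - b) ⬝ᵥ (A *ᵥ u) = u ⬝ᵥ (Aᵀ *ᵥ (A *ᵥ x - b)) := by
    rw [dotProduct_comm, dotProduct_mulVec, vecMul_transpose]
  rw [tikhFunctional, tikhFunctional, hres, dotProduct_add_self, dotProduct_add_self, hcross,
    dotProduct_add, dotProduct_smul, smul_eq_mul, dotProduct_comm x u]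
  ring

theorem posDef_transpose_mul_self_add_sq_smul_one [DecidableEq n] {lam : ℝ} (hlam : lam ≠ 0) :
    (Aᵀ * A + lam ^ 2 • (1 : Matrix n n ℝ)).PosDef := by
  have hAA : (Aᵀ * A).PosSemidef := by
    rw [← conjTranspose_eq_transpose_of_trivial]
    exact posSemidef_conjTranspose_mul_self A
  have hscalar : (lam ^ 2 • (1 : Matrix n n ℝ)).PosDef := by
    rw [smul_one_eq_diagonal]
    exact posDef_diagonal_iff.mpr fun _ => by positivity
  exact PosDef.posSemidef_add hAA hscalar

end Tikhonov

section TikhonovSolution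

variable {N M : ℕ} (A : Matrix (Fin N) (Fin M) ℝ) (b : Fin N → ℝ) {lam : ℝ}

theorem tikhSol_normal_equations (hlam : lam ≠ 0) :
    (Aᵀ * A + lam ^ 2 • (1 : Matrix (Fin M) (Fin M) ℝ)) *ᵥ tikhSol A b lam = Aᵀ *ᵥ b := by
  have hunit := (posDef_transpose_mul_self_add_sq_smul_one A hlam).isUnit
  rw [tikhSol, mulVec_mulVec, mul_nonsing_inv _ ((isUnit_iff_isUnit_det _).1 hunit), one_mulVec]

theorem tikhFunctional_tikhSol_le (hlam : lam ≠ 0) (x : Fin M → ℝ) :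
    tikhFunctional A b lam (tikhSol A b lam) ≤ tikhFunctional A b lam x := by
  have hgrad : Aᵀ *ᵥ (A *ᵥ tikhSol A b lam - b) + lam ^ 2 • tikhSol A b lam = 0 := by
    rw [mulVec_sub, mulVec_mulVec, ← tikhSol_normal_equations A b hlam, add_mulVec, smul_mulVec,
      one_mulVec]
    abel
  have hexpand := tikhFunctional_add A b lam (tikhSol A b lam) (x - tikhSol A b lam)
  rw [add_sub_cancel, hgrad, dotProduct_zero, mul_zero, add_zero] at hexpand
  rw [hexpand]
  exact le_add_of_nonneg_right (add_nonneg (dotProduct_self_nonneg _)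
    (mul_nonneg (sq_nonneg lam) (dotProduct_self_nonneg _)))

end TikhonovSolution

theorem stmt_18 {N M : ℕ} (A : Matrix (Fin N) (Fin M) ℝ) (b : Fin N → ℝ)
    (lam₁ lam₂ : ℝ) (h₁ : 0 < lam₁) (h₁₂ : lam₁ ≤ lam₂) :
    _root_.enorm (A.mulVec (tikhSol A b lam₁) - b) ≤ _root_.enorm (A.mulVec (tikhSol A b lam₂) - b) ∧
    _root_.enorm (tikhSol A b lam₂) ≤ _root_.enorm (tikhSol A b lam₁) := by
  obtain rfl | hlt := h₁₂.eq_or_lt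
  · exact ⟨le_rfl, le_rfl⟩
  have h₂ : 0 < lam₂ := h₁.trans hlt
  obtain ⟨hfit, hpenalty⟩ := fit_le_and_penalty_le_of_minimizers
    (fun x ↦ (A *ᵥ x - b) ⬝ᵥ (A *ᵥ x - b)) (fun x ↦ x ⬝ᵥ x) (sq_nonneg lam₁)
    (pow_lt_pow_left₀ hlt h₁.le two_ne_zero)
    (tikhFunctional_tikhSol_le A b h₁.ne' (tikhSol A b lam₂))
    (tikhFunctional_tikhSol_le A b h₂.ne' (tikhSol A b lam₁))
  exact ⟨enorm_le_enorm_of_dotProduct_self_le hfit, enorm_le_enorm_of_dotProduct_self_le hpenalty⟩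
end
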